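/- arXiv:2010.12445 — 5 statements merged into one kernel-verified Lean document; each statement's English description precedes it below -/
import Mathlib

section
/- Let R be a commutative ring, m, n natural numbers, M an n × m matrix over R, and I ⊆ R the ideal generated by the determinants of all n × n submatrices of M (that is, by det(M.submatrix id g) for all functions g : Fin n → Fin m). Then: (i) for every commutative R-algebra A, the A-linear map A^m → A^n induced by M (with entries mapped into A) is surjective if and only if I generates the unit ideal of A; (ii) for every prime ideal p of R, the map κ(p)^m → κ(p)^n induced by M over the residue field κ(p) of p is surjective if and only if I is not contained in p. In particular the locus {p ∈ Spec R | I ⊄ p} where M induces a surjection is a quasi-compact open subset of Spec R. -/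
/-!
A matrix `M : Matrix n m A` induces a surjection `Aᵐ → Aⁿ` iff it has a right inverse `N`. If the
maximal minors generate the unit ideal, `∑ c_g det M_g = 1`, then `N = ∑ c_g P_g adj(M_g)` is one,
where `P_g` selects the columns `g`. Conversely, expanding `det (M N)` multilinearly in the columns
of `M N` writes `1 = det (M N)` as a combination of maximal minors of `M`. Maximal minors commute
with base change, and over the field `κ(p)` the extended ideal `I κ(p)` is the unit ideal iff it is
nonzero, i.e. iff `I ⊄ p`. The surjectivity locus is the complement of `V(I)` with `I` finitely
generated, hence open and quasi-compact.
-/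

open Finset

namespace Matrix

variable {m n R : Type*} [Fintype n] [DecidableEq n] [CommRing R]

def maximalMinorsIdeal (M : Matrix n m R) : Ideal R :=
  Ideal.span (Set.range fun g : n → m => (M.submatrix id g).det)

theorem maximalMinorsIdeal_fg [Finite m] (M : Matrix n m R) : M.maximalMinorsIdeal.FG :=
  Submodule.fg_span (Set.finite_range _)

theorem map_maximalMinorsIdeal {S : Type*} [CommRing S] (M : Matrix n m R) (f : R →+* S) :
    M.maximalMinorsIdeal.map f = (M.map f).maximalMinorsIdeal := by
  simp only [maximalMinorsIdeal, Ideal.map_span, ← Set.range_comp, Function.comp_def,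
    RingHom.map_det, RingHom.mapMatrix_apply, submatrix_map]

variable [Fintype m]

theorem det_mul_eq_sum_det_submatrix (M : Matrix n m R) (N : Matrix m n R) :
    (M * N).det = ∑ g : n → m, (∏ i, N (g i) i) * (M.submatrix id g).det := by
  simp only [det_apply', mul_apply, prod_univ_sum, mul_sum, Fintype.piFinset_univ,
    submatrix_apply, id, prod_mul_distrib]
  rw [Finset.sum_comm]
  exact sum_congr rfl fun g _ => sum_congr rfl fun σ _ => by ring

theorem det_mul_mem_maximalMinorsIdeal (M : Matrix n m R) (N : Matrix m n R) :
    (M * N).det ∈ M.maximalMinorsIdeal := by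
  rw [det_mul_eq_sum_det_submatrix]
  exact Ideal.sum_mem _ fun g _ => Ideal.mul_mem_left _ _ (Ideal.subset_span ⟨g, rfl⟩)

variable [DecidableEq m]

theorem exists_mul_eq_one_of_maximalMinorsIdeal_eq_top {M : Matrix n m R}
    (h : M.maximalMinorsIdeal = ⊤) : ∃ N : Matrix m n R, M * N = 1 := by
  obtain ⟨c, hc⟩ := (Submodule.mem_span_range_iff_exists_fun R).mp
    ((Ideal.eq_top_iff_one _).mp h)
  refine ⟨∑ g, c g • ((1 : Matrix m m R).submatrix id g * (M.submatrix id g).adjugate), ?_⟩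
  have hselect (g : n → m) : M * (1 : Matrix m m R).submatrix id g = M.submatrix id g := by
    simpa using mul_submatrix_one (Equiv.refl m) g M
  simp_rw [Matrix.mul_sum, Matrix.mul_smul, ← Matrix.mul_assoc, hselect, mul_adjugate, smul_smul,
    ← sum_smul]
  simp only [← smul_eq_mul, hc, one_smul]

theorem maximalMinorsIdeal_eq_top_iff_exists_mul_eq_one (M : Matrix n m R) :
    M.maximalMinorsIdeal = ⊤ ↔ ∃ N : Matrix m n R, M * N = 1 := by
  refine ⟨exists_mul_eq_one_of_maximalMinorsIdeal_eq_top, fun ⟨N, hMN⟩ => ?_⟩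
  rw [Ideal.eq_top_iff_one, ← det_one (n := n), ← hMN]
  exact det_mul_mem_maximalMinorsIdeal M N

theorem mulVec_surjective_iff_maximalMinorsIdeal_eq_top (M : Matrix n m R) :
    Function.Surjective M.mulVec ↔ M.maximalMinorsIdeal = ⊤ := by
  rw [mulVec_surjective_iff_exists_right_inverse, maximalMinorsIdeal_eq_top_iff_exists_mul_eq_one]

end Matrix

theorem Ideal.map_eq_top_iff_not_le_ker {R K : Type*} [CommRing R] [Field K] (f : R →+* K)
    (I : Ideal R) : I.map f = ⊤ ↔ ¬ I ≤ RingHom.ker f := by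
  rw [← Ideal.map_eq_bot_iff_le_ker]
  exact ⟨fun htop hbot => top_ne_bot (htop.symm.trans hbot), (Ideal.eq_bot_or_top _).resolve_left⟩

/-- Affine two-term case of Lemma 5.2: for a matrix `M : Matrix (Fin n) (Fin m) R`, with `I` the
ideal generated by the `n × n` minors of `M`, the induced map `A^m → A^n` is surjective iff `I`
generates the unit ideal of `A`; over a residue field `κ(p)` it is surjective iff `I ⊄ p`;
and the locus `{p | I ⊄ p}` is a quasi-compact open subset of `Spec R`. -/
theorem matrix_surjective_locus
    {R : Type u} [CommRing R] (m n : ℕ) (M : Matrix (Fin n) (Fin m) R)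
    (I : Ideal R)
    (hI : I = Ideal.span {d : R | ∃ g : Fin n → Fin m, d = (M.submatrix id g).det}) :
    (∀ (A : Type u) [CommRing A] [Algebra R A],
      Function.Surjective (M.map (algebraMap R A)).mulVecLin ↔
        Ideal.map (algebraMap R A) I = ⊤) ∧
    (∀ p : PrimeSpectrum R,
      Function.Surjective
        (M.map (algebraMap R
          (IsLocalRing.ResidueField (Localization.AtPrime p.asIdeal)))).mulVecLin ↔
        ¬ I ≤ p.asIdeal) ∧
    (IsOpen {p : PrimeSpectrum R | ¬ I ≤ p.asIdeal} ∧
      IsCompact {p : PrimeSpectrum R | ¬ I ≤ p.asIdeal}) := by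
  obtain rfl : I = M.maximalMinorsIdeal := by
    simp only [hI, Matrix.maximalMinorsIdeal, Set.range, eq_comm]
  have surjective_iff (A : Type u) [CommRing A] [Algebra R A] :
      Function.Surjective (M.map (algebraMap R A)).mulVecLin ↔
        M.maximalMinorsIdeal.map (algebraMap R A) = ⊤ := by
    rw [Matrix.coe_mulVecLin, Matrix.mulVec_surjective_iff_maximalMinorsIdeal_eq_top,
      Matrix.map_maximalMinorsIdeal]
  have locus_eq : {p : PrimeSpectrum R | ¬ M.maximalMinorsIdeal ≤ p.asIdeal} =
      (PrimeSpectrum.zeroLocus M.maximalMinorsIdeal)ᶜ := rfl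
  refine ⟨surjective_iff, fun p => ?_, ?_, ?_⟩
  · rw [surjective_iff, Ideal.map_eq_top_iff_not_le_ker, Ideal.ker_algebraMap_residueField]
  · exact locus_eq ▸ (PrimeSpectrum.isClosed_zeroLocus _).isOpen_compl
  · exact locus_eq ▸
      (PrimeSpectrum.isRetrocompact_zeroLocus_compl_of_fg M.maximalMinorsIdeal_fg).isCompact
end

section
/- Let R be a commutative ring and φ : P → Q an R-linear map between finitely generated projective R-modules. Assume that for every prime ideal p of R the induced map P ⊗_R κ(p) → Q ⊗_R κ(p) over the residue field κ(p) is surjective. Then φ is surjective and the kernel of φ is a finitely generated projective R-module. -/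
universe u v

open TensorProduct

/-! The cokernel `C` of `φ` is finitely generated and, by right exactness of `κ(p) ⊗_R -`, has
`κ(p) ⊗_R C = 0` for every prime `p`; by Nakayama over the local rings `R_p` its support is empty,
so `C = 0`. Since `Q` is projective the surjection `φ` splits, so `ker φ` is a direct summand of
`P` and inherits finite generation and projectivity. -/

namespace Module

variable {R M : Type*} [CommRing R] [AddCommGroup M] [Module R M]

theorem subsingleton_of_subsingleton_residueField_tensorProduct [Module.Finite R M]
    (h : ∀ p : PrimeSpectrum R, Subsingleton (p.asIdeal.ResidueField ⊗[R] M)) :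
    Subsingleton M := by
  refine (support_eq_empty_iff (R := R)).mp (Set.eq_empty_of_forall_notMem fun p hp => ?_)
  rw [mem_support_iff_nontrivial_residueField_tensorProduct, ← not_subsingleton_iff_nontrivial]
    at hp
  exact hp (h p)

end Module

namespace LinearMap

variable {R M N : Type*} [CommRing R] [AddCommGroup M] [AddCommGroup N] [Module R M]
  [Module R N]

theorem subsingleton_lTensor_cokernel_of_lTensor_surjective {A : Type*} [AddCommGroup A]
    [Module R A] {f : M →ₗ[R] N} (hf : Function.Surjective (f.lTensor A)) :
    Subsingleton (A ⊗[R] (N ⧸ range f)) := by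
  refine subsingleton_of_forall_eq 0 fun x => ?_
  obtain ⟨y, rfl⟩ := (range f).mkQ.lTensor_surjective A (range f).mkQ_surjective x
  obtain ⟨z, rfl⟩ := hf y
  rw [← comp_apply, ← lTensor_comp, range_mkQ_comp, lTensor_zero, zero_apply]

theorem surjective_of_surjective_baseChange_residueField [Module.Finite R N] (f : M →ₗ[R] N)
    (h : ∀ p : PrimeSpectrum R, Function.Surjective (f.baseChange p.asIdeal.ResidueField)) :
    Function.Surjective f := by
  have : Subsingleton (N ⧸ range f) :=
    Module.subsingleton_of_subsingleton_residueField_tensorProduct fun p =>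
      subsingleton_lTensor_cokernel_of_lTensor_surjective (h p)
  exact range_eq_top.mp (Submodule.Quotient.subsingleton_iff.mp this)

theorem exists_leftInverse_ker_subtype [Module.Projective R N] {f : M →ₗ[R] N}
    (hf : Function.Surjective f) : ∃ π : M →ₗ[R] ker f, π ∘ₗ (ker f).subtype = id :=
  ((f.exact_subtype_ker_map.split_tfae (ker f).injective_subtype hf).out 0 1).mp
    (Module.projective_lifting_property f id hf)

end LinearMap

/-- Surjectivity counterpart of the fiberwise criterion used in the proof of Lemma 5.2: a map of
finitely generated projective modules which is surjective on every residue-field fiber is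
surjective with finitely generated projective kernel. -/
theorem surjective_projective_ker_of_fiberwise_surjective
    {R : Type u} [CommRing R] {P Q : Type v} [AddCommGroup P] [AddCommGroup Q]
    [Module R P] [Module R Q]
    [Module.Finite R P] [Module.Projective R P]
    [Module.Finite R Q] [Module.Projective R Q]
    (φ : P →ₗ[R] Q)
    (h : ∀ p : PrimeSpectrum R,
      Function.Surjective
        (LinearMap.baseChange
          (IsLocalRing.ResidueField (Localization.AtPrime p.asIdeal)) φ)) :
    Function.Surjective φ ∧
      Module.Finite R (LinearMap.ker φ) ∧
      Module.Projective R (LinearMap.ker φ) := by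
  have hφ := φ.surjective_of_surjective_baseChange_residueField h
  obtain ⟨π, hπ⟩ := LinearMap.exists_leftInverse_ker_subtype hφ
  exact ⟨hφ, .of_surjective π fun x => ⟨x, LinearMap.congr_fun hπ x⟩, .of_split _ π hπ⟩
end

section
/- Let R be a commutative ring, n a natural number, a₁, …, aₙ ∈ R, and C = R[x₁, …, xₙ]/(a₁x₁ + ⋯ + aₙxₙ − 1). Then C is flat as an R-module, and a prime ideal p of R lies in the image of the induced map Spec C → Spec R if and only if aᵢ ∉ p for some i. In other words, the image of Spec C → Spec R is exactly the complement of the vanishing locus V(a₁, …, aₙ). -/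
/-!
Write `L = a₁x₁ + ⋯ + aₙxₙ`, homogeneous of degree one, and `C = R[x] ⧸ (L - 1)`.
Modulo `L - 1` every polynomial is congruent to a homogeneous one of any degree `d` at least its
total degree (multiply its degree `k` component by `L ^ (d - k)`), and a homogeneous polynomial
`h` of degree `d` divisible by `L - 1` is killed by a power of `L`: the substitution
`xᵢ ↦ xᵢ / L` into `R[x][1/L]` kills `L - 1` and sends `h` to `h / Lᵈ`. So an `R`-linear
relation in `C` lifts to one in the free module `R[x]`, which is trivial; the equational
criterion then makes `C` flat.

Since `L = 1` in `C`, the elements `aᵢ` generate the unit ideal of `C`, so no prime of `C`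
contracts to a prime containing all of them. Conversely, if `aᵢ ∉ p`, then `xᵢ ↦ 1 / aᵢ`,
`xⱼ ↦ 0` defines a point of `Spec C` with values in `κ(p)`, lying over `p`.
-/

universe u

open MvPolynomial

theorem Module.IsTrivialRelation.map {R M N : Type*} [CommRing R] [AddCommGroup M] [Module R M]
    [AddCommGroup N] [Module R N] {ι : Type*} [Fintype ι] {f : ι → R} {x : ι → M}
    (h : IsTrivialRelation f x) (g : M →ₗ[R] N) : IsTrivialRelation f (g ∘ x) := by
  obtain ⟨k, a, y, hxy, hfa⟩ := h
  exact ⟨k, a, g ∘ y, fun i => by simp [hxy i], hfa⟩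

theorem Module.Flat.of_lift_relations {R M N : Type*} [CommRing R] [AddCommGroup M] [Module R M]
    [AddCommGroup N] [Module R N] [Module.Flat R M] (g : M →ₗ[R] N)
    (hg : ∀ {l : ℕ} {f : Fin l → R} {x : Fin l → N}, ∑ i, f i • x i = 0 →
      ∃ m : Fin l → M, (∀ i, g (m i) = x i) ∧ ∑ i, f i • m i = 0) :
    Module.Flat R N :=
  of_forall_isTrivialRelation fun hfx => by
    obtain ⟨m, hgm, hfm⟩ := hg hfx
    obtain rfl : g ∘ m = _ := funext hgm
    exact (isTrivialRelation_of_sum_smul_eq_zero hfm).map g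

theorem Ideal.Quotient.mk_self_span_sub_one {A : Type*} [CommRing A] (x : A) :
    Ideal.Quotient.mk (Ideal.span {x - 1}) x = 1 := by
  rw [← map_one (Ideal.Quotient.mk _), Ideal.Quotient.eq]
  exact Ideal.mem_span_singleton_self _

theorem PrimeSpectrum.mem_range_comap_of_algHom_residueField {R S : Type*} [CommRing R]
    [CommRing S] [Algebra R S] (p : PrimeSpectrum R) (ψ : S →ₐ[R] p.asIdeal.ResidueField) :
    p ∈ Set.range (comap (algebraMap R S)) :=
  ⟨⟨RingHom.ker ψ, RingHom.ker_isPrime ψ⟩, PrimeSpectrum.ext <| Ideal.ext fun r => by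
    simp [Ideal.mem_comap, RingHom.mem_ker]⟩

theorem PrimeSpectrum.exists_notMem_comap_of_sum_eq_one {R S ι : Type*} [CommRing R] [CommRing S]
    [Algebra R S] [Fintype ι] {a : ι → R} {y : ι → S} (h : ∑ i, algebraMap R S (a i) * y i = 1)
    (q : PrimeSpectrum S) : ∃ i, a i ∉ (comap (algebraMap R S) q).asIdeal := by
  by_contra! ha
  refine q.isPrime.ne_top (q.asIdeal.eq_top_of_isUnit_mem ?_ isUnit_one)
  rw [← h]
  exact Ideal.sum_mem _ fun i _ => Ideal.mul_mem_right _ _ (ha i)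

namespace MvPolynomial

variable {R σ : Type*} [CommRing R]

theorem IsHomogeneous.aeval_mul_const {S : Type*} [CommRing S] [Algebra R S]
    {p : MvPolynomial σ R} {e : ℕ} (hp : p.IsHomogeneous e) (y : σ → S) (c : S) :
    MvPolynomial.aeval (fun i => y i * c) p = MvPolynomial.aeval y p * c ^ e := by
  conv_lhs => rw [p.as_sum]
  conv_rhs => rw [p.as_sum]
  rw [map_sum, map_sum, Finset.sum_mul]
  refine Finset.sum_congr rfl fun s hs => ?_
  have hdeg : ∑ i ∈ s.support, s i = e := by
    rw [← Finsupp.degree_apply, Finsupp.degree_eq_weight_one]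
    exact hp (mem_support_iff.mp hs)
  simp only [aeval_monomial, Finsupp.prod, mul_pow, Finset.prod_mul_distrib,
    Finset.prod_pow_eq_pow_sum, hdeg, mul_assoc]

variable {L : MvPolynomial σ R}

theorem exists_pow_mul_eq_zero_of_isHomogeneous_of_mem_span (hL : L.IsHomogeneous 1)
    {d : ℕ} {h : MvPolynomial σ R} (hh : h.IsHomogeneous d) (hmem : h ∈ Ideal.span {L - 1}) :
    ∃ k : ℕ, L ^ k * h = 0 := by
  let ι := algebraMap (MvPolynomial σ R) (Localization.Away L)
  let u := IsLocalization.Away.invSelf (S := Localization.Away L) L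
  have hLu : ι L * u = 1 := IsLocalization.Away.mul_invSelf L
  let φ := aeval (R := R) fun i => ι (X i) * u
  have hφ {e : ℕ} {p : MvPolynomial σ R} (hp : p.IsHomogeneous e) : φ p = ι p * u ^ e := by
    rw [hp.aeval_mul_const]
    congr 1
    exact (DFunLike.congr_fun
      (aeval_unique (IsScalarTower.toAlgHom R (MvPolynomial σ R) (Localization.Away L))) p).symm
  have hφh : ι h * u ^ d = 0 := by
    obtain ⟨q, rfl⟩ := Ideal.mem_span_singleton.mp hmem
    rw [← hφ hh, map_mul, map_sub, map_one, hφ hL, pow_one, hLu, sub_self, zero_mul]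
  have hιh : ι h = 0 := by
    simpa [mul_assoc, ← mul_pow, mul_comm u, hLu] using congrArg (· * ι L ^ d) hφh
  obtain ⟨⟨_, k, rfl⟩, hk⟩ := (IsLocalization.map_eq_zero_iff (Submonoid.powers L) _ h).mp hιh
  exact ⟨k, hk⟩

theorem sum_range_homogeneousComponent {p : MvPolynomial σ R} {d : ℕ} (hd : p.totalDegree ≤ d) :
    ∑ k ∈ Finset.range (d + 1), homogeneousComponent k p = p := by
  rw [← Finset.sum_subset (Finset.range_subset_range.mpr (Nat.succ_le_succ hd)),
    sum_homogeneousComponent]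
  intro k _ hk
  exact homogeneousComponent_eq_zero k p (by simpa using hk)

theorem exists_isHomogeneous_mk_eq (hL : L.IsHomogeneous 1) {p : MvPolynomial σ R} {d : ℕ}
    (hd : p.totalDegree ≤ d) :
    ∃ h : MvPolynomial σ R, h.IsHomogeneous d ∧
      Ideal.Quotient.mk (Ideal.span {L - 1}) h = Ideal.Quotient.mk (Ideal.span {L - 1}) p := by
  refine ⟨∑ k ∈ Finset.range (d + 1), homogeneousComponent k p * L ^ (d - k), ?_, ?_⟩
  · refine IsHomogeneous.sum _ _ _ fun k hk => ?_
    have hkd : k + 1 * (d - k) = d := by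
      have := Finset.mem_range.mp hk
      omega
    simpa only [hkd] using (homogeneousComponent_isHomogeneous k p).mul (hL.pow (d - k))
  · simp only [map_sum, map_mul, map_pow, Ideal.Quotient.mk_self_span_sub_one, one_pow, mul_one]
    rw [← map_sum, sum_range_homogeneousComponent hd]

theorem flat_quotient_span_sub_one (hL : L.IsHomogeneous 1) :
    Module.Flat R (MvPolynomial σ R ⧸ Ideal.span {L - 1}) := by
  let π := Ideal.Quotient.mkₐ R (Ideal.span {L - 1})
  refine Module.Flat.of_lift_relations π.toLinearMap fun {l f x} hfx => ?_
  choose P hP using fun i => Ideal.Quotient.mk_surjective (x i)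
  choose h hh hπh using fun i =>
    exists_isHomogeneous_mk_eq hL (Finset.le_sup (f := fun i => (P i).totalDegree)
      (Finset.mem_univ i))
  have hsum : ∑ i, f i • h i ∈ Ideal.span {L - 1} := by
    rw [← Ideal.Quotient.eq_zero_iff_mem, ← Ideal.Quotient.mkₐ_eq_mk R]
    simpa [Ideal.Quotient.mkₐ_eq_mk, hπh, hP] using hfx
  obtain ⟨k, hk⟩ := exists_pow_mul_eq_zero_of_isHomogeneous_of_mem_span hL
    (IsHomogeneous.sum _ _ _ fun i _ => by simpa only [smul_eq_C_mul] using (hh i).C_mul (f i))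
    hsum
  refine ⟨fun i => L ^ k * h i, fun i => ?_, ?_⟩
  · simp [π, Ideal.Quotient.mkₐ_eq_mk, Ideal.Quotient.mk_self_span_sub_one, hπh, hP]
  · simpa only [Finset.mul_sum, mul_smul_comm] using hk

variable [Fintype σ]

noncomputable def linearForm (a : σ → R) : MvPolynomial σ R := ∑ i, C (a i) * X i

theorem isHomogeneous_linearForm (a : σ → R) : (linearForm a).IsHomogeneous 1 :=
  IsHomogeneous.sum _ _ _ fun i _ => isHomogeneous_C_mul_X (a i) i

theorem mem_range_comap_quotient_linearForm_iff (a : σ → R) (p : PrimeSpectrum R) :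
    p ∈ Set.range (PrimeSpectrum.comap
      (algebraMap R (MvPolynomial σ R ⧸ Ideal.span {linearForm a - 1}))) ↔
      ∃ i, a i ∉ p.asIdeal := by
  classical
  constructor
  · rintro ⟨q, rfl⟩
    refine PrimeSpectrum.exists_notMem_comap_of_sum_eq_one
      (y := fun i => Ideal.Quotient.mk _ (X i)) ?_ q
    rw [← Ideal.Quotient.mk_self_span_sub_one (linearForm a), linearForm, map_sum]
    rfl
  · rintro ⟨i, hi⟩
    let v : σ → p.asIdeal.ResidueField := Pi.single i (algebraMap R _ (a i))⁻¹
    have hv : aeval v (linearForm a) = 1 := by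
      have hai : algebraMap R p.asIdeal.ResidueField (a i) ≠ 0 :=
        Ideal.algebraMap_residueField_eq_zero.not.mpr hi
      simpa [linearForm, v, Pi.single_apply] using mul_inv_cancel₀ hai
    refine p.mem_range_comap_of_algHom_residueField
      (Ideal.Quotient.liftₐ _ (aeval v) fun r hr => ?_)
    obtain ⟨q, rfl⟩ := Ideal.mem_span_singleton.mp hr
    simp [hv]

end MvPolynomial

/-- Construction from the proof of Theorem 4.2: with
`C = R[x₁,…,xₙ]/(a₁x₁ + ⋯ + aₙxₙ - 1)`, the ring `C` is flat over `R` and the image of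
`Spec C → Spec R` is exactly the complement of the vanishing locus `V(a₁,…,aₙ)`. -/
theorem flat_and_image_of_inverting_linear_form
    {R : Type u} [CommRing R] (n : ℕ) (a : Fin n → R) :
    Module.Flat R
      (MvPolynomial (Fin n) R ⧸
        Ideal.span {(∑ i, MvPolynomial.C (a i) * MvPolynomial.X i) - 1}) ∧
      ∀ p : PrimeSpectrum R,
        (p ∈ Set.range
          (PrimeSpectrum.comap
            (algebraMap R
              (MvPolynomial (Fin n) R ⧸
                Ideal.span {(∑ i, MvPolynomial.C (a i) * MvPolynomial.X i) - 1})))) ↔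
        ∃ i, a i ∉ p.asIdeal :=
  ⟨flat_quotient_span_sub_one (isHomogeneous_linearForm a),
    mem_range_comap_quotient_linearForm_iff a⟩
end

section
/- Let R be a commutative ring and f : R^a → R^b, g : R^b → R^c be R-linear maps between finite free modules with g ∘ f = 0. Then there exists a quasi-compact open subset U of Spec R such that for every commutative R-algebra A the following are equivalent: (i) the base-changed sequence A^a → A^b → A^c → 0 is exact, i.e. the induced map g_A : A^b → A^c is surjective and the kernel of g_A equals the image of f_A; (ii) for every prime ideal q of A, its contraction to R lies in U. -/
/-!
The locus is the complement of `V(I)`, where `I` is the product of the ideal of `c × c` minors of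
the matrix `G` of `g` and the ideal of `(b - c) × (b - c)` minors of the matrix `F` of `f`; since
`I` is finitely generated, `U` is quasi-compact. Over an `R`-algebra `A`, surjectivity of `G` plus
exactness is the same as split exactness (`G H = 1`, `F K + H G = 1`), which survives passage to
the residue fields of `A`. There it says that `G` has rank `c` and `F` has rank `b - c`, so some
minor of each size is a unit: the minors generate the unit ideal of `A`. Conversely, if they
do, Cramer's rule shows that every vector, resp. every cycle, becomes a boundary after
multiplication by any minor, hence is one. Finally `I A = A` iff no prime of `A` contracts into
`V(I)`.
-/

universe u v

open Function

lemma Ideal.eq_top_of_forall_map_quotient_eq_top {R : Type*} [CommRing R] {I : Ideal R}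
    (h : ∀ q : Ideal R, q.IsMaximal → I.map (Ideal.Quotient.mk q) = ⊤) : I = ⊤ := by
  by_contra hI
  obtain ⟨q, hq, hIq⟩ := I.exists_le_maximal hI
  have : Nontrivial (R ⧸ q) := Ideal.Quotient.nontrivial_iff.mpr hq.ne_top
  have hbot : I.map (Ideal.Quotient.mk q) = ⊥ := by
    rwa [Ideal.map_eq_bot_iff_le_ker, Ideal.mk_ker]
  exact bot_ne_top (hbot.symm.trans (h q hq))

namespace Matrix

variable {l m n k A : Type*} [CommRing A]

noncomputable def minorsIdeal (r : ℕ) (M : Matrix m n A) : Ideal A :=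
  Ideal.span (Set.range fun p : (Fin r ↪ m) × (Fin r ↪ n) => (M.submatrix p.1 p.2).det)

lemma minorsIdeal_fg [Finite m] [Finite n] (r : ℕ) (M : Matrix m n A) :
    (minorsIdeal r M).FG :=
  Submodule.fg_span (Set.finite_range _)

lemma minorsIdeal_map {B : Type*} [CommRing B] (φ : A →+* B) (r : ℕ) (M : Matrix m n A) :
    minorsIdeal r (M.map φ) = (minorsIdeal r M).map φ := by
  simp only [minorsIdeal, Ideal.map_span, ← Set.range_comp, comp_def, RingHom.map_det,
    RingHom.mapMatrix_apply, submatrix_map]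

lemma card_le_of_minorsIdeal_eq_top [Fintype n] [Nontrivial A] {r : ℕ} {M : Matrix m n A}
    (h : minorsIdeal r M = ⊤) : r ≤ Fintype.card n := by
  by_contra! hlt
  have : IsEmpty (Fin r ↪ n) := Embedding.isEmpty_of_card_lt (by simpa using hlt)
  simp [minorsIdeal, Set.range_eq_empty] at h

section Field

variable {K : Type*} [Field K] [Fintype m] [Fintype n]

lemma exists_linearIndependent_cols_of_le_rank {r : ℕ} (M : Matrix m n K) (hr : r ≤ M.rank) :
    ∃ j : Fin r → n, LinearIndependent K (M.submatrix id j).col := by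
  obtain ⟨v, hv, -, hli⟩ := Submodule.exists_fun_fin_finrank_span_eq K (Set.range M.col)
  choose j hj using hv
  rw [rank_eq_finrank_span_cols] at hr
  refine ⟨j ∘ Fin.castLE hr, ?_⟩
  have hcol : (M.submatrix id (j ∘ Fin.castLE hr)).col = v ∘ Fin.castLE hr :=
    funext fun i => hj _
  rw [hcol]
  exact hli.comp _ (Fin.castLE_injective hr)

lemma exists_submatrix_det_ne_zero_of_le_rank {r : ℕ} (M : Matrix m n K) (hr : r ≤ M.rank) :
    ∃ (i : Fin r ↪ m) (j : Fin r ↪ n), (M.submatrix i j).det ≠ 0 := by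
  obtain ⟨j, hj⟩ := exists_linearIndependent_cols_of_le_rank M hr
  have hN : r ≤ (M.submatrix id j)ᵀ.rank := by
    rw [rank_transpose, rank_eq_finrank_span_cols, finrank_span_eq_card hj, Fintype.card_fin]
  obtain ⟨i, hi⟩ := exists_linearIndependent_cols_of_le_rank _ hN
  have hrows : LinearIndependent K (M.submatrix i j).row := hi
  refine ⟨⟨i, fun a b hab => hrows.injective (funext fun x => by simp [hab])⟩,
    ⟨j, fun a b hab => hj.injective (funext fun x => by simp [hab])⟩, ?_⟩
  exact ((isUnit_iff_isUnit_det _).mp (linearIndependent_rows_iff_isUnit.mp hrows)).ne_zero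

lemma minorsIdeal_eq_top_of_le_rank {r : ℕ} (M : Matrix m n K) (hr : r ≤ M.rank) :
    minorsIdeal r M = ⊤ := by
  obtain ⟨i, j, h⟩ := exists_submatrix_det_ne_zero_of_le_rank M hr
  exact Ideal.eq_top_of_isUnit_mem _ (Ideal.subset_span ⟨(i, j), rfl⟩) h.isUnit

lemma rank_eq_card_of_surjective {G : Matrix m n K} (h : Surjective G.mulVec) :
    G.rank = Fintype.card m := by
  rw [Matrix.rank, LinearMap.range_eq_top.mpr h, finrank_top, Module.finrank_fintype_fun_eq_card]

omit [Fintype m] in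
lemma rank_add_rank_eq_card_of_exact [Fintype l] {F : Matrix n l K} {G : Matrix m n K}
    (h : Exact F.mulVecLin G.mulVecLin) : F.rank + G.rank = Fintype.card n := by
  rw [Matrix.rank, Matrix.rank, ← LinearMap.exact_iff.mp h, add_comm,
    LinearMap.finrank_range_add_finrank_ker, Module.finrank_fintype_fun_eq_card]

end Field

lemma exists_mul_eq_of_mulVec_mem_range [Fintype l] [Fintype k] [DecidableEq k]
    {F : Matrix n l A} {X : Matrix n k A} (h : ∀ v, X *ᵥ v ∈ Set.range F.mulVec) :
    ∃ K : Matrix l k A, F * K = X := by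
  choose c hc using fun j => h (Pi.single j 1)
  refine ⟨(Matrix.of c)ᵀ, Matrix.ext fun i j => ?_⟩
  calc (F * (of c)ᵀ) i j = (F *ᵥ c j) i := rfl
    _ = X i j := by rw [hc j, mulVec_single_one]; rfl

section Splitting

variable [Fintype l] [Fintype m] [Fintype n] [DecidableEq m] [DecidableEq n]

theorem surjective_and_exact_iff_exists_splitting {F : Matrix n l A} {G : Matrix m n A}
    (hGF : G * F = 0) :
    (Surjective G.mulVec ∧ Exact F.mulVecLin G.mulVecLin) ↔
      ∃ (H : Matrix n m A) (K : Matrix l n A), G * H = 1 ∧ F * K + H * G = 1 := by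
  constructor
  · rintro ⟨hsurj, hexact⟩
    obtain ⟨H, hGH⟩ := mulVec_surjective_iff_exists_right_inverse.mp hsurj
    obtain ⟨K, hK⟩ := exists_mul_eq_of_mulVec_mem_range (F := F) (X := 1 - H * G) fun v =>
      (hexact _).mp (by simp [mulVec_mulVec, Matrix.mul_sub, ← Matrix.mul_assoc, hGH])
    exact ⟨H, K, hGH, by rw [hK, sub_add_cancel]⟩
  · rintro ⟨H, K, hGH, hsplit⟩
    refine ⟨mulVec_surjective_iff_exists_right_inverse.mpr ⟨H, hGH⟩,
      fun v => ⟨fun hv => ?_, ?_⟩⟩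
    · replace hv : G *ᵥ v = 0 := hv
      refine ⟨K *ᵥ v, ?_⟩
      calc F *ᵥ (K *ᵥ v) = (F * K + H * G) *ᵥ v := by
            rw [add_mulVec, ← mulVec_mulVec, ← mulVec_mulVec, hv, mulVec_zero, add_zero]
        _ = v := by rw [hsplit, one_mulVec]
    · rintro ⟨u, rfl⟩
      simp [mulVec_mulVec, hGF]

end Splitting

section Surjective

variable [Fintype n]

lemma range_mulVecLin_submatrix_id_le [Fintype k] (M : Matrix m n A) (j : k → n) :
    LinearMap.range (M.submatrix id j).mulVecLin ≤ LinearMap.range M.mulVecLin := by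
  classical
  rintro _ ⟨y, rfl⟩
  exact ⟨(1 : Matrix n n A).submatrix id j *ᵥ y, by
    simpa [mulVec_mulVec] using congrArg (· *ᵥ y) (mul_submatrix_one (Equiv.refl n) j M)⟩

lemma det_smul_mem_range_of_bijective {r : ℕ} (G : Matrix m n A) {S : Fin r → m}
    (hS : Bijective S) (T : Fin r → n) (w : m → A) :
    (G.submatrix S T).det • w ∈ LinearMap.range G.mulVecLin := by
  set e := Equiv.ofBijective S hS
  set N := G.submatrix S T
  have hN : N *ᵥ (N.adjugate *ᵥ (w ∘ e)) = N.det • (w ∘ e) := by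
    rw [mulVec_mulVec, mul_adjugate, smul_mulVec, one_mulVec]
  have hG : G.submatrix id T = N.submatrix e.symm (Equiv.refl _) := by
    simp [N, e, submatrix_submatrix, comp_def, Equiv.ofBijective_apply_symm_apply]
    rfl
  have hw : G.submatrix id T *ᵥ (N.adjugate *ᵥ (w ∘ e)) = N.det • w := by
    rw [hG, submatrix_mulVec_equiv, Equiv.refl_symm, Equiv.coe_refl, comp_id, hN]
    ext; simp [e, Equiv.ofBijective_apply_symm_apply]
  exact hw ▸ range_mulVecLin_submatrix_id_le G T ⟨_, rfl⟩

theorem mulVec_surjective_of_minorsIdeal_eq_top [Fintype m] {G : Matrix m n A}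
    (h : minorsIdeal (Fintype.card m) G = ⊤) : Surjective G.mulVec := by
  intro w
  refine LinearMap.mem_range.mp
    (Submodule.mem_of_span_top_of_smul_mem (LinearMap.range G.mulVecLin) _ h w ?_)
  rintro ⟨_, ⟨S, T⟩, rfl⟩
  exact det_smul_mem_range_of_bijective G
    ((Fintype.bijective_iff_injective_and_card S).mpr ⟨S.injective, by simp⟩) T w

end Surjective

/-- If `card m > card n`, the first factor is already `⊥`, so the truncated subtraction
`card n - card m` is harmless. -/
noncomputable def exactnessIdeal [Fintype m] [Fintype n] (F : Matrix n l A) (G : Matrix m n A) :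
    Ideal A :=
  minorsIdeal (Fintype.card m) G * minorsIdeal (Fintype.card n - Fintype.card m) F

section ExactnessIdeal

variable [Fintype m] [Fintype n]

lemma exactnessIdeal_fg [Finite l] (F : Matrix n l A) (G : Matrix m n A) :
    (exactnessIdeal F G).FG :=
  (minorsIdeal_fg _ G).mul (minorsIdeal_fg _ F)

lemma exactnessIdeal_map {B : Type*} [CommRing B] (φ : A →+* B) (F : Matrix n l A)
    (G : Matrix m n A) : exactnessIdeal (F.map φ) (G.map φ) = (exactnessIdeal F G).map φ := by
  rw [exactnessIdeal, exactnessIdeal, Ideal.map_mul, minorsIdeal_map, minorsIdeal_map]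

lemma exactnessIdeal_eq_top_of_field [Fintype l] {K : Type*} [Field K] {F : Matrix n l K}
    {G : Matrix m n K} (hsurj : Surjective G.mulVec) (hexact : Exact F.mulVecLin G.mulVecLin) :
    exactnessIdeal F G = ⊤ := by
  have hG := rank_eq_card_of_surjective hsurj
  have hF := rank_add_rank_eq_card_of_exact hexact
  rw [exactnessIdeal, minorsIdeal_eq_top_of_le_rank G hG.ge,
    minorsIdeal_eq_top_of_le_rank F (by omega), Ideal.top_mul]

end ExactnessIdeal

section Exact

variable [Fintype l] [Fintype m] [Fintype n] [DecidableEq m] [DecidableEq n]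

lemma det_fromCols_smul_mem_range [Fintype k] [DecidableEq k]
    {F : Matrix n k A} {G : Matrix m n A} {H : Matrix n m A} (hGF : G * F = 0) (hGH : G * H = 1)
    (e : k ⊕ m ≃ n) {v : n → A} (hv : G *ᵥ v = 0) :
    ((fromCols F H).submatrix id e.symm).det • v ∈ LinearMap.range F.mulVecLin := by
  -- Cramer's rule solves `P x = det P • v`; applying `G` kills the `F`-part of `P x`, so the
  -- `H`-part of `x` vanishes.
  set P := (fromCols F H).submatrix id e.symm
  set x := (P.adjugate *ᵥ v) ∘ e
  have hPx : F *ᵥ (x ∘ Sum.inl) + H *ᵥ (x ∘ Sum.inr) = P.det • v := by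
    rw [← fromCols_mulVec]
    have := submatrix_mulVec_equiv (fromCols F H) (P.adjugate *ᵥ v) id e.symm
    simp only [Equiv.symm_symm, comp_id] at this
    rw [← this, mulVec_mulVec, mul_adjugate, smul_mulVec, one_mulVec]
  have hx : x ∘ Sum.inr = 0 := by
    simpa [mulVec_add, mulVec_mulVec, hGF, hGH, mulVec_smul, hv] using congrArg (G *ᵥ ·) hPx
  exact ⟨x ∘ Sum.inl, by simpa [hx] using hPx⟩

lemma det_fromCols_dvd_det_submatrix [Fintype k] [DecidableEq k]
    {F : Matrix n k A} {G : Matrix m n A} {H : Matrix n m A} (hGF : G * F = 0) (hGH : G * H = 1)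
    (e : k ⊕ m ≃ n) (S : k → n) :
    ((fromCols F H).submatrix id e.symm).det ∣ (F.submatrix S id).det := by
  -- `Q * P` is block upper triangular with diagonal blocks `F.submatrix S id` and `1`.
  set Q := (fromRows ((1 : Matrix n n A).submatrix S id) G).submatrix e.symm id
  refine ⟨Q.det, ?_⟩
  have h1F : (1 : Matrix n n A).submatrix S id * F = F.submatrix S id := by
    simpa using one_submatrix_mul S (Equiv.refl n) F
  rw [mul_comm, ← det_mul, ← submatrix_mul _ _ _ _ _ bijective_id, det_submatrix_equiv_self,
    fromRows_mul_fromCols, h1F, hGF, hGH, det_fromBlocks_zero₂₁, det_one, mul_one]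

theorem exact_of_minorsIdeal_eq_top {r : ℕ} {F : Matrix n l A} {G : Matrix m n A}
    {H : Matrix n m A} (hGF : G * F = 0) (hGH : G * H = 1) (e : Fin r ⊕ m ≃ n)
    (hF : minorsIdeal r F = ⊤) : Exact F.mulVecLin G.mulVecLin := by
  refine LinearMap.exact_of_comp_eq_zero_of_ker_le_range (by rw [← mulVecLin_mul, hGF,
    mulVecLin_zero]) fun v hv => Submodule.mem_of_span_top_of_smul_mem _ _ hF v ?_
  rintro ⟨_, ⟨S, T⟩, rfl⟩
  have hGFT : G * F.submatrix id T = 0 := by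
    rw [← submatrix_id_id G, ← submatrix_mul _ _ _ _ _ bijective_id, hGF]
    rfl
  obtain ⟨d, hd⟩ := det_fromCols_dvd_det_submatrix hGFT hGH e S
  change ((F.submatrix id T).submatrix S id).det • v ∈ _
  rw [hd, mul_comm, mul_smul]
  exact range_mulVecLin_submatrix_id_le F T
    (Submodule.smul_mem _ d (det_fromCols_smul_mem_range hGFT hGH e hv))

theorem surjective_and_exact_iff_exactnessIdeal_eq_top {F : Matrix n l A} {G : Matrix m n A}
    (hGF : G * F = 0) :
    (Surjective G.mulVec ∧ Exact F.mulVecLin G.mulVecLin) ↔ exactnessIdeal F G = ⊤ := by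
  constructor
  · intro h
    obtain ⟨H, K, hGH, hsplit⟩ := (surjective_and_exact_iff_exists_splitting hGF).mp h
    refine Ideal.eq_top_of_forall_map_quotient_eq_top fun q hq => ?_
    let _ : Field (A ⧸ q) := Ideal.Quotient.field q
    set φ := Ideal.Quotient.mk q
    have hGF' : G.map φ * F.map φ = 0 := by
      rw [← Matrix.map_mul, hGF, Matrix.map_zero _ (map_zero φ)]
    obtain ⟨hsurj, hexact⟩ := (surjective_and_exact_iff_exists_splitting hGF').mpr
      ⟨H.map φ, K.map φ,
        by rw [← Matrix.map_mul, hGH, Matrix.map_one _ (map_zero φ) (map_one φ)],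
        by rw [← Matrix.map_mul, ← Matrix.map_mul, ← Matrix.map_add _ (map_add φ), hsplit,
          Matrix.map_one _ (map_zero φ) (map_one φ)]⟩
    rw [← exactnessIdeal_map, exactnessIdeal_eq_top_of_field hsurj hexact]
  · intro h
    have hG : minorsIdeal (Fintype.card m) G = ⊤ := eq_top_mono Ideal.mul_le_left h
    have hF : minorsIdeal (Fintype.card n - Fintype.card m) F = ⊤ :=
      eq_top_mono Ideal.mul_le_right h
    have hsurj := mulVec_surjective_of_minorsIdeal_eq_top hG
    refine ⟨hsurj, ?_⟩
    cases subsingleton_or_nontrivial A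
    · exact fun _ => ⟨fun _ => ⟨0, Subsingleton.elim _ _⟩, fun _ => Subsingleton.elim _ _⟩
    obtain ⟨H, hGH⟩ := mulVec_surjective_iff_exists_right_inverse.mp hsurj
    have e : Fin (Fintype.card n - Fintype.card m) ⊕ m ≃ n := Fintype.equivOfCardEq <| by
      simp [Nat.sub_add_cancel (card_le_of_minorsIdeal_eq_top hG)]
    exact exact_of_minorsIdeal_eq_top hGF hGH e hF

end Exact

end Matrix

section BaseChange

open Algebra.TensorProduct

variable {R : Type*} [CommRing R] (A : Type*) [CommRing A] [Algebra R A]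
  {ι κ μ : Type*} [Fintype ι] [Fintype κ] [Fintype μ]

lemma LinearMap.mulVecLin_toMatrix'_map_comp_equivFun [DecidableEq ι]
    (f : (ι → R) →ₗ[R] κ → R) :
    ((LinearMap.toMatrix' f).map (algebraMap R A)).mulVecLin ∘ₗ
        (basis A (Pi.basisFun R ι)).equivFun.toLinearMap =
      (basis A (Pi.basisFun R κ)).equivFun.toLinearMap ∘ₗ f.baseChange A := by
  refine LinearMap.ext fun x => ?_
  simp only [LinearMap.comp_apply, LinearEquiv.coe_coe, Module.Basis.equivFun_apply,
    Matrix.mulVecLin_apply]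
  have := LinearMap.toMatrix_mulVec_repr (basis A (Pi.basisFun R ι)) (basis A (Pi.basisFun R κ))
    (f.baseChange A) x
  rw [LinearMap.toMatrix_baseChange] at this
  exact this

theorem LinearMap.baseChange_surjective_and_exact_iff [DecidableEq ι] [DecidableEq κ]
    (f : (ι → R) →ₗ[R] κ → R) (g : (κ → R) →ₗ[R] μ → R) :
    (Surjective (g.baseChange A) ∧ Exact (f.baseChange A) (g.baseChange A)) ↔
      (Surjective ((LinearMap.toMatrix' g).map (algebraMap R A)).mulVec ∧
        Exact ((LinearMap.toMatrix' f).map (algebraMap R A)).mulVecLin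
          ((LinearMap.toMatrix' g).map (algebraMap R A)).mulVecLin) := by
  have hf := LinearMap.mulVecLin_toMatrix'_map_comp_equivFun A f
  have hg := LinearMap.mulVecLin_toMatrix'_map_comp_equivFun A g
  refine and_congr ?_ (Exact.iff_of_ladder_linearEquiv hf hg).symm
  rw [← EquivLike.comp_surjective _ (basis A (Pi.basisFun R μ)).equivFun,
    ← LinearEquiv.coe_coe, ← LinearMap.coe_comp, ← hg, LinearMap.coe_comp,
    LinearEquiv.coe_coe, EquivLike.surjective_comp]
  rfl

end BaseChange

lemma PrimeSpectrum.forall_comap_mem_compl_zeroLocus_iff {R S : Type*} [CommRing R]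
    [CommRing S] (φ : R →+* S) (I : Ideal R) :
    (∀ q : PrimeSpectrum S, comap φ q ∈ (zeroLocus (I : Set R))ᶜ) ↔ I.map φ = ⊤ := by
  rw [← zeroLocus_empty_iff_eq_top, Set.eq_empty_iff_forall_notMem]
  refine forall_congr' fun q => not_congr ?_
  rw [mem_zeroLocus, mem_zeroLocus, SetLike.coe_subset_coe, SetLike.coe_subset_coe,
    Ideal.map_le_iff_le_comap]
  rfl

/-- Affine-target case of Lemma 5.2: given a complex `R^a → R^b → R^c` of finite free modules,
there is a quasi-compact open subset `U ⊆ Spec R` such that for every commutative `R`-algebra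
`A` the base-changed sequence `A^a → A^b → A^c → 0` is exact if and only if every prime of `A`
contracts into `U`. -/
theorem exists_quasiCompact_open_exactness_locus
    {R : Type u} [CommRing R] (a b c : ℕ)
    (f : (Fin a → R) →ₗ[R] (Fin b → R)) (g : (Fin b → R) →ₗ[R] (Fin c → R))
    (hgf : g.comp f = 0) :
    ∃ U : Set (PrimeSpectrum R), IsOpen U ∧ IsCompact U ∧
      ∀ (A : Type v) [CommRing A] [Algebra R A],
        (Function.Surjective (LinearMap.baseChange A g) ∧
          Function.Exact (LinearMap.baseChange A f) (LinearMap.baseChange A g)) ↔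
        ∀ q : PrimeSpectrum A, PrimeSpectrum.comap (algebraMap R A) q ∈ U := by
  set F := LinearMap.toMatrix' f
  set G := LinearMap.toMatrix' g
  have hGF : G * F = 0 := by rw [← LinearMap.toMatrix'_comp, hgf, map_zero]
  obtain ⟨hcompact, hopen⟩ :=
    PrimeSpectrum.isCompact_isOpen_iff_ideal.mpr ⟨_, Matrix.exactnessIdeal_fg F G, rfl⟩
  refine ⟨_, hopen, hcompact, fun A _ _ => ?_⟩
  have hGF_A : G.map (algebraMap R A) * F.map (algebraMap R A) = 0 := by
    rw [← Matrix.map_mul, hGF, Matrix.map_zero _ (map_zero _)]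
  rw [LinearMap.baseChange_surjective_and_exact_iff,
    Matrix.surjective_and_exact_iff_exactnessIdeal_eq_top hGF_A, Matrix.exactnessIdeal_map,
    PrimeSpectrum.forall_comap_mem_compl_zeroLocus_iff]
end

section
/- Let k be a field, A = k[x, y, z] the polynomial ring in three variables, K its field of fractions, and B the k-subalgebra of K generated by x/y, y and z/y (note A ⊆ B since x = (x/y)·y and z = (z/y)·y). Then the image of the map Spec B → Spec A induced by the inclusion A ⊆ B consists exactly of those prime ideals p of A with y ∉ p, together with the maximal ideal (x, y, z). -/
/-!
Write `m = (x, y, z)`. Every element of `B = A[m/y]` is a fraction `f / yⁿ` with `f ∈ mⁿ`, so the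
extension of an ideal `I` to `B` consists of fractions `f / yⁿ` with `f ∈ I mⁿ`. Hence a prime `p`
of `A` is a contraction as soon as `a yⁿ ∈ p mⁿ` forces `a ∈ p`: for `y ∉ p` this is primality,
and for `p = m` it holds because `yⁿ` has degree `n` while `mⁿ⁺¹` has order `n + 1`. Conversely,
if `y` lies in the contraction of a prime of `B`, so do `x = (x/y) y` and `z = (z/y) y`, and
maximality of `m` forces the contraction to be `m`.
-/

universe u v

section BlowupFractions

variable {A K : Type*} [CommRing A] [CommRing K] [Algebra A K] {m I J : Ideal A} {y : A}

/-- The fractions `f / y ^ n` with `f ∈ I * m ^ n`, written as `b * y ^ n = f` to avoid division.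
For `I = ⊤` and `y ∈ m` this is the affine blowup algebra `A[m/y]`. -/
def blowupFractions (m : Ideal A) (y : A) (I : Ideal A) : Set K :=
  {b | ∃ n, ∃ f ∈ I * m ^ n, b * algebraMap A K y ^ n = algebraMap A K f}

theorem algebraMap_mem_blowupFractions {a : A} (ha : a ∈ I) :
    algebraMap A K a ∈ blowupFractions m y I :=
  ⟨0, a, by rwa [pow_zero, Ideal.one_eq_top, Ideal.mul_top], by rw [pow_zero, mul_one]⟩

theorem add_mem_blowupFractions (hy : y ∈ m) {b c : K} (hb : b ∈ blowupFractions m y I)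
    (hc : c ∈ blowupFractions m y I) : b + c ∈ blowupFractions m y I := by
  obtain ⟨n₁, f₁, hf₁, e₁⟩ := hb
  obtain ⟨n₂, f₂, hf₂, e₂⟩ := hc
  have mul_pow_mem : ∀ {n n' f}, f ∈ I * m ^ n → f * y ^ n' ∈ I * m ^ (n + n') := fun hf => by
    rw [pow_add, ← mul_assoc]
    exact Ideal.mul_mem_mul hf (Ideal.pow_mem_pow hy _)
  refine ⟨n₁ + n₂, f₁ * y ^ n₂ + f₂ * y ^ n₁,
    add_mem (mul_pow_mem hf₁) (add_comm n₂ n₁ ▸ mul_pow_mem hf₂), ?_⟩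
  rw [map_add, map_mul, map_mul, map_pow, map_pow, ← e₁, ← e₂]
  ring

theorem mul_mem_blowupFractions {b c : K} (hb : b ∈ blowupFractions m y I)
    (hc : c ∈ blowupFractions m y J) : b * c ∈ blowupFractions m y (I * J) := by
  obtain ⟨n₁, f₁, hf₁, e₁⟩ := hb
  obtain ⟨n₂, f₂, hf₂, e₂⟩ := hc
  refine ⟨n₁ + n₂, f₁ * f₂, ?_, ?_⟩
  · rw [pow_add, mul_mul_mul_comm]
    exact Ideal.mul_mem_mul hf₁ hf₂
  · rw [map_mul, ← e₁, ← e₂]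
    ring

theorem adjoin_subset_blowupFractions {R : Type*} [CommRing R] [Algebra R A] [Algebra R K]
    [IsScalarTower R A K] (hy : y ∈ m) {s : Set K} (hs : s ⊆ blowupFractions m y ⊤) :
    (Algebra.adjoin R s : Set K) ⊆ blowupFractions m y ⊤ := by
  intro b hb
  induction hb using Algebra.adjoin_induction with
  | mem b hb => exact hs hb
  | algebraMap r =>
    rw [IsScalarTower.algebraMap_apply R A K]
    exact algebraMap_mem_blowupFractions Submodule.mem_top
  | add b c _ _ hb hc => exact add_mem_blowupFractions hy hb hc
  | mul b c _ _ hb hc => simpa using mul_mem_blowupFractions hb hc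

variable {R : Type*} [CommRing R] [Algebra R K] {B : Subalgebra R K} {φ : A →+* B}

theorem coe_mem_blowupFractions_of_mem_map (hy : y ∈ m)
    (hφ : ∀ a, (φ a : K) = algebraMap A K a) (hB : (B : Set K) ⊆ blowupFractions m y ⊤)
    {b : B} (hb : b ∈ I.map φ) : (b : K) ∈ blowupFractions m y I := by
  induction hb using Submodule.span_induction with
  | mem b hb =>
    obtain ⟨a, ha, rfl⟩ := hb
    exact hφ a ▸ algebraMap_mem_blowupFractions ha
  | zero => exact ⟨0, 0, zero_mem _, by simp⟩
  | add b c _ _ hb hc => exact add_mem_blowupFractions hy hb hc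
  | smul c b _ hb => simpa using mul_mem_blowupFractions (hB c.2) hb

theorem exists_mul_pow_mem_of_map_mem (hy : y ∈ m) (hinj : Function.Injective (algebraMap A K))
    (hφ : ∀ a, (φ a : K) = algebraMap A K a) (hB : (B : Set K) ⊆ blowupFractions m y ⊤)
    {a : A} (ha : φ a ∈ I.map φ) : ∃ n, a * y ^ n ∈ I * m ^ n := by
  obtain ⟨n, f, hf, e⟩ := coe_mem_blowupFractions_of_mem_map hy hφ hB ha
  have hfa : a * y ^ n = f := hinj (by rw [map_mul, map_pow, ← e, hφ])
  exact ⟨n, hfa ▸ hf⟩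

theorem mem_range_comap_of_mul_pow_mem (hy : y ∈ m) (hinj : Function.Injective (algebraMap A K))
    (hφ : ∀ a, (φ a : K) = algebraMap A K a) (hB : (B : Set K) ⊆ blowupFractions m y ⊤)
    {p : PrimeSpectrum A} (hp : ∀ a n, a * y ^ n ∈ p.asIdeal * m ^ n → a ∈ p.asIdeal) :
    p ∈ Set.range (PrimeSpectrum.comap φ) := by
  refine (PrimeSpectrum.mem_range_comap_iff φ).mpr (le_antisymm (fun a ha => ?_) Ideal.le_comap_map)
  obtain ⟨n, hn⟩ := exists_mul_pow_mem_of_map_mem hy hinj hφ hB (Ideal.mem_comap.mp ha)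
  exact hp a n hn

end BlowupFractions

theorem div_mem_blowupFractions {A F : Type*} [CommRing A] [Field F] [Algebra A F] {m : Ideal A}
    {g y : A} (hg : g ∈ m) (hy : algebraMap A F y ≠ 0) :
    algebraMap A F g / algebraMap A F y ∈ blowupFractions m y ⊤ :=
  ⟨1, g, by simpa using hg, by rw [pow_one, div_mul_cancel₀ _ hy]⟩

theorem map_mem_of_div_mem {A R F : Type*} [CommRing A] [CommRing R] [Field F] [Algebra A F]
    [Algebra R F] {B : Subalgebra R F}
    {φ : A →+* B} (hφ : ∀ a, (φ a : F) = algebraMap A F a) {g y : A}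
    (hy : algebraMap A F y ≠ 0) (hg : algebraMap A F g / algebraMap A F y ∈ B)
    {q : Ideal B} (hq : φ y ∈ q) : φ g ∈ q := by
  have : φ g = ⟨_, hg⟩ * φ y := Subtype.ext (by simp [hφ, div_mul_cancel₀ _ hy])
  exact this ▸ q.mul_mem_left _ hq

theorem comap_eq_span_of_map_mem {A R F : Type*} [CommRing A] [CommRing R] [Field F]
    [Algebra A F] [Algebra R F] {B : Subalgebra R F} {φ : A →+* B}
    (hφ : ∀ a, (φ a : F) = algebraMap A F a) {s : Set A} (hs : (Ideal.span s).IsMaximal) {y : A}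
    (hy : algebraMap A F y ≠ 0) (hdiv : ∀ g ∈ s, algebraMap A F g / algebraMap A F y ∈ B)
    {q : PrimeSpectrum B} (hq : φ y ∈ q.asIdeal) :
    (PrimeSpectrum.comap φ q).asIdeal = Ideal.span s :=
  (hs.eq_of_le (PrimeSpectrum.comap φ q).isPrime.ne_top <|
    Ideal.span_le.mpr fun g hg => map_mem_of_div_mem hφ hy (hdiv g hg) hq).symm

namespace MvPolynomial

variable {σ R : Type*} [CommSemiring R]

theorem idealOfVars_eq_ker_constantCoeff :
    idealOfVars σ R = RingHom.ker (constantCoeff : MvPolynomial σ R →+* R) := by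
  ext p
  rw [← pow_one (idealOfVars σ R), mem_pow_idealOfVars_iff', RingHom.mem_ker, constantCoeff_eq]
  simp [Finsupp.degree_eq_zero_iff]

theorem isMaximal_idealOfVars {k : Type*} [Field k] : (idealOfVars σ k).IsMaximal := by
  rw [idealOfVars_eq_ker_constantCoeff]
  exact RingHom.ker_isMaximal_of_surjective _ fun c => ⟨C c, constantCoeff_C _ _⟩

theorem mem_idealOfVars_of_mul_X_pow_mem {a : MvPolynomial σ R} {i : σ} {n : ℕ}
    (h : a * X i ^ n ∈ idealOfVars σ R ^ (n + 1)) : a ∈ idealOfVars σ R := by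
  classical
  have hcoeff := (mem_pow_idealOfVars_iff' _ _).mp h (Finsupp.single i n) (by simp)
  rw [X_pow_eq_monomial, coeff_mul_monomial', if_pos le_rfl, tsub_self, mul_one] at hcoeff
  rw [idealOfVars_eq_ker_constantCoeff, RingHom.mem_ker, constantCoeff_eq, hcoeff]

end MvPolynomial

open MvPolynomial

/-- Heart of Example 5.18: for `A = k[x,y,z]` with fraction field `K` and
`B = k[x/y, y, z/y] ⊆ K`, the image of `Spec B → Spec A` consists exactly of the primes `p`
of `A` with `y ∉ p`, together with the maximal ideal `(x, y, z)`. -/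
theorem image_spec_of_blowup_chart
    (k : Type u) [Field k]
    (K : Type v) [Field K] [Algebra (MvPolynomial (Fin 3) k) K]
    [IsFractionRing (MvPolynomial (Fin 3) k) K]
    [Algebra k K] [IsScalarTower k (MvPolynomial (Fin 3) k) K]
    (x y z : K)
    (hx : x = algebraMap (MvPolynomial (Fin 3) k) K (X 0))
    (hy : y = algebraMap (MvPolynomial (Fin 3) k) K (X 1))
    (hz : z = algebraMap (MvPolynomial (Fin 3) k) K (X 2))
    (B : Subalgebra k K) (hB : B = Algebra.adjoin k {x / y, y, z / y})
    (φ : MvPolynomial (Fin 3) k →+* B)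
    (hφ : ∀ a : MvPolynomial (Fin 3) k,
      (φ a : K) = algebraMap (MvPolynomial (Fin 3) k) K a) :
    Set.range (PrimeSpectrum.comap φ) =
      {p : PrimeSpectrum (MvPolynomial (Fin 3) k) | X 1 ∉ p.asIdeal} ∪
        {p : PrimeSpectrum (MvPolynomial (Fin 3) k) |
          p.asIdeal = Ideal.span {X 0, X 1, X 2}} := by
  subst hx hy hz
  set A := MvPolynomial (Fin 3) k
  set m : Ideal A := idealOfVars (Fin 3) k
  have hm : Ideal.span {X 0, X 1, X 2} = m := by
    congr 1; ext; simp [Fin.exists_fin_succ, eq_comm]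
  have hinj := IsFractionRing.injective A K
  have hX : ∀ i, X i ∈ m := fun i => Ideal.subset_span ⟨i, rfl⟩
  have hy0 : algebraMap A K (X 1) ≠ 0 := (map_ne_zero_iff _ hinj).mpr (X_ne_zero 1)
  have hdiv : ∀ i, algebraMap A K (X i) / algebraMap A K (X 1) ∈ B := by
    intro i
    rw [hB]
    fin_cases i
    exacts [Algebra.subset_adjoin (Or.inl rfl), div_self hy0 ▸ one_mem _,
      Algebra.subset_adjoin (Or.inr (Or.inr rfl))]
  have hB_frac : (B : Set K) ⊆ blowupFractions m (X 1) ⊤ := by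
    rw [hB]
    refine adjoin_subset_blowupFractions (hX 1) ?_
    rintro _ (rfl | rfl | rfl)
    exacts [div_mem_blowupFractions (hX 0) hy0, algebraMap_mem_blowupFractions Submodule.mem_top,
      div_mem_blowupFractions (hX 2) hy0]
  ext p
  simp only [Set.mem_union, Set.mem_ofPred_eq]
  rw [hm]
  constructor
  · rintro ⟨q, rfl⟩
    exact or_iff_not_imp_left.mpr fun hq => comap_eq_span_of_map_mem hφ isMaximal_idealOfVars hy0
      (Set.forall_mem_range.mpr hdiv) (not_not.mp hq)
  · rintro (hp | hp) <;> refine mem_range_comap_of_mul_pow_mem (hX 1) hinj hφ hB_frac ?_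
    · intro a n ha
      have hap : a * X 1 ^ n ∈ p.asIdeal := Ideal.mul_le_left ha
      exact (p.isPrime.mem_or_mem hap).resolve_right fun h => hp (p.isPrime.mem_of_pow_mem n h)
    · rw [hp]
      intro a n ha
      exact mem_idealOfVars_of_mul_X_pow_mem (pow_succ' m n ▸ ha)
end
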